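/- Let n ≥ 2, d ≥ 2, and let k₀ be the largest integer k ≥ 0 with k(k+1)/2 < n−1 (k₀ = 0 when n = 2). Let f₁,…,f_P be linearly independent homogeneous polynomials of degree d−1 in ℂ[z₁,…,zₙ], and let ρ be the ℂ-dimension of the degree-d homogeneous component of the ideal ⟨f₁,…,f_P⟩ (this equals the rank of the Hermitian squared norm ‖f(z)‖²‖z‖²). Then either ρ ≥ (k₀+1)n − k₀(k₀+1)/2, or there exists an integer 0 ≤ k ≤ k₀ such that nk − k(k−1)/2 ≤ ρ ≤ nk. -/

import Mathlib

/-!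
The degree-`d` part of `⟨f₁,…,f_P⟩` is spanned by the `nP` products `zⱼ fᵢ`, so `ρ ≤ nP`.
For the lower bound fix a monomial order. A `P`-dimensional space of polynomials has exactly `P`
distinct leading exponents `a`, and multiplying by `zⱼ` turns them into leading exponents
`eⱼ + a` of elements of the degree-`d` part, whose dimension is at least the number of its
leading exponents. Two distinct exponents `a ≠ b` have at most one common shift
(`eⱼ + a = eⱼ' + b` and `eₖ + a = eₖ' + b` force `j = k`), so there are at least
`nP - P(P-1)/2` shifts and `ρ ≥ nP - P(P-1)/2`. Taking `k = P` when `P ≤ k₀`, and otherwise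
applying the bound to `k₀ + 1` of the `fᵢ`, gives the dichotomy.
-/

open MvPolynomial

/-- The degree-`ℓ` homogeneous component of an ideal `I`, as a subspace. -/
noncomputable def idealDegComp {n : ℕ} (I : Ideal (MvPolynomial (Fin n) ℂ)) (ℓ : ℕ) :
    Submodule ℂ (MvPolynomial (Fin n) ℂ) where
  carrier := {p | p ∈ I ∧ p.IsHomogeneous ℓ}
  add_mem' := fun ha hb => ⟨I.add_mem ha.1 hb.1, ha.2.add hb.2⟩
  zero_mem' := ⟨I.zero_mem, MvPolynomial.isHomogeneous_zero _ _ _⟩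
  smul_mem' := fun c p hp =>
    ⟨by simpa [MvPolynomial.smul_eq_C_mul] using I.mul_mem_left (MvPolynomial.C c) hp.1,
     by simpa [MvPolynomial.smul_eq_C_mul] using hp.2.C_mul c⟩

open Finset Module

theorem card_mul_le_card_biUnion_add_choose_two {α β : Type*} [DecidableEq α] [DecidableEq β]
    (s : Finset α) (A : α → Finset β) {N : ℕ} (hcard : ∀ a ∈ s, #(A a) = N)
    (hinter : ∀ a ∈ s, ∀ b ∈ s, a ≠ b → #(A a ∩ A b) ≤ 1) :
    N * #s ≤ #(s.biUnion A) + (#s).choose 2 := by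
  induction s using Finset.induction_on with
  | empty => simp
  | insert a t ha ih =>
    have hoverlap : #(A a ∩ t.biUnion A) ≤ #t := by
      rw [inter_biUnion]
      simpa using card_biUnion_le_card_mul t _ 1 fun b hb =>
        hinter a (mem_insert_self a t) b (mem_insert_of_mem hb) (ne_of_mem_of_not_mem hb ha).symm
    have hunion := card_union_add_card_inter (A a) (t.biUnion A)
    have ht := ih (fun b hb => hcard b (mem_insert_of_mem hb))
      fun b hb c hc => hinter b (mem_insert_of_mem hb) c (mem_insert_of_mem hc)
    rw [biUnion_insert, card_insert_of_notMem ha, Nat.choose_succ_succ', Nat.choose_one_right]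
    rw [hcard a (mem_insert_self a t)] at hunion
    linarith

section Shifts

variable {σ : Type*} [Fintype σ] [DecidableEq σ]

noncomputable def monomialShifts (a : σ →₀ ℕ) : Finset (σ →₀ ℕ) :=
  univ.image fun j => Finsupp.single j 1 + a

theorem card_monomialShifts (a : σ →₀ ℕ) : #(monomialShifts a) = Fintype.card σ :=
  card_image_of_injective _ fun _ _ h =>
    Finsupp.single_left_injective one_ne_zero (add_right_cancel h)

theorem card_monomialShifts_inter_le_one {a b : σ →₀ ℕ} (hab : a ≠ b) :
    #(monomialShifts a ∩ monomialShifts b) ≤ 1 := by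
  refine card_le_one.mpr fun x hx y hy => ?_
  simp only [monomialShifts, mem_inter, mem_image, mem_univ, true_and] at hx hy
  obtain ⟨⟨j, rfl⟩, j', hj'⟩ := hx
  obtain ⟨⟨k, rfl⟩, k', hk'⟩ := hy
  have : Finsupp.single j 1 + Finsupp.single k' 1 = Finsupp.single j' 1 + Finsupp.single k 1 := by
    apply add_right_cancel (b := a + b)
    calc _ = (Finsupp.single j 1 + a) + (Finsupp.single k' 1 + b) := by abel
      _ = (Finsupp.single j' 1 + b) + (Finsupp.single k 1 + a) := by rw [hj', hk']
      _ = _ := by abel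
  rcases (Finsupp.single_add_single_eq_single_add_single one_ne_zero one_ne_zero).mp this with
    ⟨rfl, -⟩ | ⟨-, rfl, -⟩ | ⟨h, -⟩
  · exact absurd (add_left_cancel hj').symm hab
  · rfl
  · exact absurd h (by norm_num)

end Shifts

section Graded

attribute [local instance] MvPolynomial.gradedAlgebra

theorem homogeneousComponent_add_mul_of_isHomogeneous {σ R : Type*} [CommSemiring R]
    {g : MvPolynomial σ R} {e : ℕ} (hg : g.IsHomogeneous e) (c : MvPolynomial σ R) (k : ℕ) :
    homogeneousComponent (k + e) (c * g) = homogeneousComponent k c * g := by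
  have := DirectSum.coe_decompose_mul_of_right_mem_of_le (𝒜 := homogeneousSubmodule σ R)
    (a := c) (n := k + e) hg (Nat.le_add_left e k)
  rw [Nat.add_sub_cancel] at this
  rw [← decomposition.decompose'_apply, ← decomposition.decompose'_apply]
  exact this

end Graded

namespace MonomialOrder

variable {σ K : Type*} [Field K] (m : MonomialOrder σ)

def leadingDegrees (W : Submodule K (MvPolynomial σ K)) : Set (σ →₀ ℕ) :=
  {a | ∃ p ∈ W, p ≠ 0 ∧ m.degree p = a}

theorem linearIndependent_of_injective_degree {ι : Type*} {v : ι → MvPolynomial σ K}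
    (hv : ∀ i, v i ≠ 0) (hinj : Function.Injective (m.degree ∘ v)) : LinearIndependent K v := by
  classical
  -- The nonzero term of largest leading degree has nothing to cancel against.
  refine linearIndependent_iff'.mpr fun s g hg i his => by_contra fun hgi => ?_
  obtain ⟨i₀, hi₀, hmax⟩ := (s.filter (g · ≠ 0)).exists_max_image (m.toSyn ∘ m.degree ∘ v)
    ⟨i, mem_filter.mpr ⟨his, hgi⟩⟩
  obtain ⟨hi₀s, hgi₀⟩ := mem_filter.mp hi₀
  have hcoeff : ∀ b ∈ s, b ≠ i₀ → g b * coeff (m.degree (v i₀)) (v b) = 0 := by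
    intro b hbs hb
    by_cases hgb : g b = 0
    · rw [hgb, zero_mul]
    · have hlt : m.degree (v b) ≺[m] m.degree (v i₀) :=
        (hmax b (mem_filter.mpr ⟨hbs, hgb⟩)).lt_of_ne fun h => hb (hinj (m.toSyn.injective h))
      rw [m.coeff_eq_zero_of_lt hlt, mul_zero]
  have := congr_arg (coeff (m.degree (v i₀))) hg
  simp only [coeff_sum, coeff_smul, smul_eq_mul, coeff_zero] at this
  rw [sum_eq_single_of_mem i₀ hi₀s hcoeff] at this
  exact mul_ne_zero hgi₀ (m.coeff_degree_ne_zero_iff.mpr (hv i₀)) this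

variable {W : Submodule K (MvPolynomial σ K)}

theorem finrank_le_card_of_degree_mem {D : Finset (σ →₀ ℕ)}
    (hD : ∀ p ∈ W, p ≠ 0 → m.degree p ∈ D) : finrank K W ≤ #D := by
  let coeffs : W →ₗ[K] D → K := LinearMap.pi fun a => (lcoeff K a).comp W.subtype
  have hinj : Function.Injective coeffs := by
    refine (injective_iff_map_eq_zero coeffs).mpr fun p hp => by_contra fun h0 => ?_
    have hp0 : (p : MvPolynomial σ K) ≠ 0 := by simpa using h0
    exact m.coeff_degree_ne_zero_iff.mpr hp0 (congr_fun hp ⟨_, hD p p.2 hp0⟩)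
  simpa using LinearMap.finrank_le_finrank_of_injective hinj

variable [FiniteDimensional K W]

theorem card_le_finrank_of_subset_leadingDegrees {D : Finset (σ →₀ ℕ)}
    (hD : ↑D ⊆ m.leadingDegrees W) : #D ≤ finrank K W := by
  choose p hpW hp0 hpdeg using fun a : D => hD a.2
  have hli : LinearIndependent K fun a : D => (⟨p a, hpW a⟩ : W) :=
    .of_comp W.subtype <| m.linearIndependent_of_injective_degree hp0 fun a b h =>
      Subtype.ext <| by simpa [hpdeg] using h
  simpa using hli.fintype_card_le_finrank

theorem leadingDegrees_finite : (m.leadingDegrees W).Finite := by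
  by_contra h
  obtain ⟨D, hD, hcard⟩ := Set.Infinite.exists_subset_card_eq h (finrank K W + 1)
  have := m.card_le_finrank_of_subset_leadingDegrees hD
  omega

theorem ncard_leadingDegrees : (m.leadingDegrees W).ncard = finrank K W := by
  have hfin := m.leadingDegrees_finite (W := W)
  rw [Set.ncard_eq_toFinset_card _ hfin]
  refine le_antisymm (m.card_le_finrank_of_subset_leadingDegrees (by simp))
    (m.finrank_le_card_of_degree_mem fun p hp hp0 => ?_)
  exact hfin.mem_toFinset.mpr ⟨p, hp, hp0, rfl⟩

theorem single_add_mem_leadingDegrees {W W' : Submodule K (MvPolynomial σ K)}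
    (hWW' : ∀ j, ∀ p ∈ W, X j * p ∈ W') {a : σ →₀ ℕ} (ha : a ∈ m.leadingDegrees W) (j : σ) :
    Finsupp.single j 1 + a ∈ m.leadingDegrees W' := by
  obtain ⟨p, hpW, hp0, rfl⟩ := ha
  exact ⟨X j * p, hWW' j p hpW, mul_ne_zero (X_ne_zero j) hp0,
    by rw [m.degree_mul (X_ne_zero j) hp0, m.degree_X]⟩

end MonomialOrder

theorem card_mul_finrank_le_finrank_add_choose_two {σ K : Type*} [Fintype σ] [LinearOrder σ]
    [Field K] {W W' : Submodule K (MvPolynomial σ K)} [FiniteDimensional K W]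
    [FiniteDimensional K W'] (hWW' : ∀ j, ∀ p ∈ W, X j * p ∈ W') :
    Fintype.card σ * finrank K W ≤ finrank K W' + (finrank K W).choose 2 := by
  let m : MonomialOrder σ := .lex
  let S := (m.leadingDegrees_finite (W := W)).toFinset
  have hS : #S = finrank K W := by
    rw [← Set.ncard_eq_toFinset_card _ m.leadingDegrees_finite, m.ncard_leadingDegrees]
  have hshifts : ↑(S.biUnion monomialShifts) ⊆ m.leadingDegrees W' := by
    intro x hx
    simp only [monomialShifts, coe_biUnion, coe_image, coe_univ, Set.image_univ,
      Set.mem_iUnion, Set.mem_range] at hx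
    obtain ⟨a, ha, j, rfl⟩ := hx
    exact m.single_add_mem_leadingDegrees hWW' (by simpa [S] using ha) j
  have hcount := card_mul_le_card_biUnion_add_choose_two S _
    (fun a _ => card_monomialShifts a) fun a _ b _ hab => card_monomialShifts_inter_le_one hab
  have hrank := m.card_le_finrank_of_subset_leadingDegrees hshifts
  rw [hS] at hcount
  omega

theorem card_mul_card_le_finrank_add_choose_two {σ K ι : Type*} [Fintype σ] [LinearOrder σ]
    [Field K] [Fintype ι] {f : ι → MvPolynomial σ K} (hf : LinearIndependent K f)
    {W' : Submodule K (MvPolynomial σ K)} [FiniteDimensional K W'] (hW' : ∀ j i, X j * f i ∈ W') :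
    Fintype.card σ * Fintype.card ι ≤ finrank K W' + (Fintype.card ι).choose 2 := by
  have : FiniteDimensional K (Submodule.span K (Set.range f)) :=
    .span_of_finite K (Set.finite_range f)
  rw [← finrank_span_eq_card hf]
  refine card_mul_finrank_le_finrank_add_choose_two fun j p hp => ?_
  have : Submodule.span K (Set.range f) ≤ W'.comap (LinearMap.mulLeft K (X j)) :=
    Submodule.span_le.mpr (Set.range_subset_iff.mpr (hW' j))
  exact this hp

theorem homogeneousComponent_succ_mem_span_X_mul {σ R ι : Type*} [CommSemiring R] [Fintype ι]
    {f : ι → MvPolynomial σ R} {e : ℕ} (hf : ∀ i, (f i).IsHomogeneous e)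
    {p : MvPolynomial σ R} (hp : p ∈ Ideal.span (Set.range f)) :
    homogeneousComponent (1 + e) p ∈
      Submodule.span R (Set.range fun ji : σ × ι => X ji.1 * f ji.2) := by
  obtain ⟨c, rfl⟩ := Ideal.mem_span_range_iff_exists_fun.mp hp
  rw [map_sum]
  refine Submodule.sum_mem _ fun i _ => ?_
  rw [homogeneousComponent_add_mul_of_isHomogeneous (hf i)]
  have h1 : homogeneousComponent 1 (c i) ∈ Submodule.span R (Set.range X) := by
    rw [← homogeneousSubmodule_one_eq_span_X]
    exact homogeneousComponent_mem 1 (c i)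
  have := Submodule.mem_map_of_mem (f := LinearMap.mulRight R (f i)) h1
  rw [Submodule.map_span, ← Set.range_comp] at this
  refine Submodule.span_mono ?_ this
  rintro _ ⟨j, rfl⟩
  exact ⟨(j, i), rfl⟩

theorem idealDegComp_span_eq_span_X_mul {n e : ℕ} {ι : Type*} [Fintype ι]
    {f : ι → MvPolynomial (Fin n) ℂ} (hf : ∀ i, (f i).IsHomogeneous e) :
    idealDegComp (Ideal.span (Set.range f)) (1 + e) =
      Submodule.span ℂ (Set.range fun ji : Fin n × ι => X ji.1 * f ji.2) := by
  refine le_antisymm ?_ (Submodule.span_le.mpr ?_)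
  · rintro p ⟨hpI, hp⟩
    rw [← homogeneousComponent_eq_self hp]
    exact homogeneousComponent_succ_mem_span_X_mul hf hpI
  · rintro _ ⟨⟨j, i⟩, rfl⟩
    exact ⟨Ideal.mul_mem_left _ _ (Ideal.subset_span ⟨i, rfl⟩), (isHomogeneous_X ℂ j).mul (hf i)⟩

theorem sos_positive_definite_case_general
    {n : ℕ} {d : ℕ} (hd : 2 ≤ d) {P : ℕ}
    (k₀ : ℕ)
    (f : Fin P → MvPolynomial (Fin n) ℂ)
    (hf : ∀ j, (f j).IsHomogeneous (d - 1))
    (hind : LinearIndependent ℂ f)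
    (ρ : ℕ)
    (hρ : ρ = Module.finrank ℂ (idealDegComp (Ideal.span (Set.range f)) d)) :
    (k₀ + 1) * n - k₀ * (k₀ + 1) / 2 ≤ ρ ∨
      ∃ k : ℕ, k ≤ k₀ ∧ n * k - k * (k - 1) / 2 ≤ ρ ∧ ρ ≤ n * k := by
  obtain ⟨e, rfl⟩ : ∃ e, d = 1 + e := ⟨d - 1, by omega⟩
  rw [Nat.add_sub_cancel_left] at hf
  rw [idealDegComp_span_eq_span_X_mul hf] at hρ
  set W := Submodule.span ℂ (Set.range fun ji : Fin n × Fin P => X ji.1 * f ji.2)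
  have hX : ∀ j i, X j * f i ∈ W := fun j i => Submodule.subset_span ⟨(j, i), rfl⟩
  have : FiniteDimensional ℂ W := .span_of_finite ℂ (Set.finite_range _)
  have hupper : ρ ≤ n * P := by
    simpa [hρ, Set.finrank] using
      finrank_range_le_card (R := ℂ) fun ji : Fin n × Fin P => X ji.1 * f ji.2
  by_cases hP : P ≤ k₀
  · have hlower := card_mul_card_le_finrank_add_choose_two hind hX
    simp only [Fintype.card_fin, Nat.choose_two_right, ← hρ] at hlower
    exact .inr ⟨P, hP, by omega, hupper⟩
  · have hle : k₀ + 1 ≤ P := by omega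
    have hlower := card_mul_card_le_finrank_add_choose_two
      (hind.comp _ (Fin.castLE_injective hle)) fun j i => hX j (Fin.castLE hle i)
    simp only [Fintype.card_fin, Nat.choose_two_right, Nat.add_sub_cancel, ← hρ] at hlower
    left
    rw [mul_comm (k₀ + 1) n, mul_comm k₀ (k₀ + 1)]
    omega

/-- **Theorem 3.4: the SOS Conjecture holds for signature pair `(P,0)`.**
If `f₁,…,f_P` are linearly independent homogeneous polynomials of degree
`d−1` in `ℂ[z₁,…,zₙ]` and `ρ = dim_ℂ (⟨f₁,…,f_P⟩)_d` (the rank of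
`‖f(z)‖²‖z‖²`), then either `ρ ≥ (k₀+1)n − k₀(k₀+1)/2`, or
`nk − k(k−1)/2 ≤ ρ ≤ nk` for some `0 ≤ k ≤ k₀`, where `k₀` is the largest
integer `k ≥ 0` with `k(k+1)/2 < n−1`. -/
theorem sos_positive_definite_case
    {n : ℕ} (hn : 2 ≤ n) {d : ℕ} (hd : 2 ≤ d) {P : ℕ}
    (k₀ : ℕ) (hk₀ : k₀ * (k₀ + 1) / 2 < n - 1)
    (hk₀max : ∀ k : ℕ, k * (k + 1) / 2 < n - 1 → k ≤ k₀)
    (f : Fin P → MvPolynomial (Fin n) ℂ)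
    (hf : ∀ j, (f j).IsHomogeneous (d - 1))
    (hind : LinearIndependent ℂ f)
    (ρ : ℕ)
    (hρ : ρ = Module.finrank ℂ (idealDegComp (Ideal.span (Set.range f)) d)) :
    (k₀ + 1) * n - k₀ * (k₀ + 1) / 2 ≤ ρ ∨
      ∃ k : ℕ, k ≤ k₀ ∧ n * k - k * (k - 1) / 2 ≤ ρ ∧ ρ ≤ n * k :=
  sos_positive_definite_case_general hd k₀ f hf hind ρ hρ
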